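/- arXiv:1212.5145 — 2 statements merged into one kernel-verified Lean document; each statement's English description precedes it below -/
import Mathlib

section
/- Let H be a Hilbert space and f : H → H Lipschitz with constant L > 0. If x : ℝ → H is a non-constant continuously differentiable solution of x' = f(x) which is periodic with period T > 0, then T ≥ 2π/L. -/
/-!
Let `T₀` be the least period of `x`, which exists because `x` is continuous and non-constant, and
put `y t = x (t + T₀ / 2) - x t`. Then `‖y'‖ ≤ L ‖y‖`, so by Grönwall `y` never vanishes (otherwise
it would vanish identically and `T₀ / 2` would be a period), and `y (T₀ / 2) = -y 0`. The direction
`u = y / ‖y‖` is then a curve on the unit sphere of speed at most `‖y'‖ / ‖y‖ ≤ L` from `u 0` to its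
antipode. Since `u' ⊥ u`, the spherical distance `arccos ⟪u 0, u t⟫` grows at rate at most `L`
away from `0` and `π`, so `π ≤ L T₀ / 2`.
-/

open Real Set Function
open scoped RealInnerProductSpace

def Function.periods {X : Type*} (x : ℝ → X) : AddSubgroup ℝ where
  carrier := {p | Periodic x p}
  zero_mem' := fun t => by rw [add_zero]
  add_mem' := Periodic.add_period
  neg_mem' := Periodic.neg

theorem Function.isClosed_periods {X : Type*} [TopologicalSpace X] [T2Space X] {x : ℝ → X}
    (hx : Continuous x) : IsClosed (periods x : Set ℝ) := by
  have : (periods x : Set ℝ) = ⋂ t, {p | x (t + p) = x t} := by ext; simp [periods, Periodic]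
  rw [this]
  exact isClosed_iInter fun t => isClosed_eq (by fun_prop) continuous_const

theorem Function.Periodic.exists_isLeast_pos_period {X : Type*} [TopologicalSpace X] [T2Space X]
    {x : ℝ → X} {T : ℝ} (hper : Periodic x T) (hT : T ≠ 0) (hx : Continuous x)
    (hnonconst : ∃ s t, x s ≠ x t) : ∃ T₀, IsLeast {p | p ∈ periods x ∧ 0 < p} T₀ := by
  by_contra hmin
  have hne : periods x ≠ ⊥ := fun h => hT (by simpa [h] using (show T ∈ periods x from hper))
  have huniv : (periods x : Set ℝ) = univ := by
    rw [← (isClosed_periods hx).closure_eq, (AddSubgroup.dense_of_no_min _ hne hmin).closure_eq]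
  obtain ⟨s, t, hst⟩ := hnonconst
  have hall : ∀ p, Periodic x p := fun p => show p ∈ (periods x : Set ℝ) by simp [huniv]
  exact hst (by simpa using (hall s 0).trans (hall t 0).symm)

theorem Function.Periodic.eq_zero_of_norm_deriv_le_mul_norm {E : Type*} [NormedAddCommGroup E]
    [NormedSpace ℝ E] {y y' : ℝ → E} {K P t₀ : ℝ} (hper : Periodic y P) (hP : 0 < P)
    (hy : ∀ t, HasDerivAt y (y' t) t) (bound : ∀ t, ‖y' t‖ ≤ K * ‖y t‖) (h₀ : y t₀ = 0)
    (t : ℝ) : y t = 0 := by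
  obtain ⟨s, hs, hts⟩ := hper.exists_mem_Ico hP t t₀
  rw [hts]
  exact eq_zero_of_abs_deriv_le_mul_abs_self_of_eq_zero_right
    (fun t _ => (hy t).continuousAt.continuousWithinAt) (fun t _ => (hy t).hasDerivWithinAt) h₀
    (fun t _ => bound t) s (Ico_subset_Icc_self hs)

section InnerProduct

variable {H : Type*} [NormedAddCommGroup H] [InnerProductSpace ℝ H]

theorem norm_sub_inner_smul_sq {v : H} (hv : ‖v‖ = 1) (z : H) :
    ‖z - ⟪v, z⟫ • v‖ ^ 2 = ‖z‖ ^ 2 - ⟪v, z⟫ ^ 2 := by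
  rw [norm_sub_sq_real, real_inner_smul_right, norm_smul, hv, real_inner_comm, norm_eq_abs]
  ring_nf
  rw [sq_abs]
  ring

theorem norm_sub_inner_smul_le {v : H} (hv : ‖v‖ = 1) (z : H) : ‖z - ⟪v, z⟫ • v‖ ≤ ‖z‖ :=
  pow_le_pow_iff_left₀ (norm_nonneg _) (norm_nonneg _) two_ne_zero |>.1 <| by
    rw [norm_sub_inner_smul_sq hv]; nlinarith [sq_nonneg ⟪v, z⟫]

theorem abs_inner_le_norm_mul_sqrt {v w e : H} (hv : ‖v‖ = 1) (he : ‖e‖ = 1) (hvw : ⟪v, w⟫ = 0) :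
    |⟪e, w⟫| ≤ ‖w‖ * √(1 - ⟪e, v⟫ ^ 2) := by
  rw [real_inner_comm v e]
  have hproj : ⟪e, w⟫ = ⟪e - ⟪v, e⟫ • v, w⟫ := by
    rw [inner_sub_left, real_inner_smul_left, hvw, mul_zero, sub_zero]
  have hnorm : ‖e - ⟪v, e⟫ • v‖ = √(1 - ⟪v, e⟫ ^ 2) := by
    rw [← one_pow 2, ← he, ← norm_sub_inner_smul_sq hv, sqrt_sq (norm_nonneg _)]
  rw [hproj, mul_comm, ← hnorm]
  exact abs_real_inner_le_norm _ _

theorem HasDerivAt.norm {y : ℝ → H} {y' : H} {t : ℝ} (hy : HasDerivAt y y' t) (h₀ : y t ≠ 0) :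
    HasDerivAt (fun s => ‖y s‖) (⟪y t, y'⟫ / ‖y t‖) t := by
  have h := hy.norm_sq.sqrt (by positivity)
  simp only [sqrt_sq (norm_nonneg _)] at h
  convert h using 1
  field_simp

theorem HasDerivAt.normalize {y : ℝ → H} {y' : H} {t : ℝ} (hy : HasDerivAt y y' t)
    (h₀ : y t ≠ 0) :
    HasDerivAt (fun s => NormedSpace.normalize (y s))
      (‖y t‖⁻¹ • (y' - ⟪NormedSpace.normalize (y t), y'⟫ • NormedSpace.normalize (y t))) t := by
  have hn : ‖y t‖ ≠ 0 := norm_ne_zero_iff.2 h₀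
  convert ((hy.norm h₀).inv hn).smul hy using 1
  · rfl
  · simp only [Pi.inv_apply, NormedSpace.normalize, real_inner_smul_left, smul_smul, smul_sub]
    module

theorem sub_le_mul_of_hasDerivAt_le_of_ne {θ θ' : ℝ → ℝ} {a b α β L : ℝ} (hab : a ≤ b)
    (hαβ : α < β) (hθ : ContinuousOn θ (Icc a b)) (ha : θ a = α) (hb : θ b = β)
    (hderiv : ∀ t ∈ Ioo a b, θ t ≠ α → θ t ≠ β → HasDerivAt θ (θ' t) t ∧ θ' t ≤ L) :
    β - α ≤ L * (b - a) := by
  have hbdd₂ : BddBelow (Icc a b ∩ θ ⁻¹' {β}) := bddBelow_Icc.mono inter_subset_left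
  -- `t₂` is the first time `θ` reaches `β` and `t₁` the last time before `t₂` that `θ = α`,
  -- so `θ` takes neither value on `(t₁, t₂)`.
  set t₂ := sInf (Icc a b ∩ θ ⁻¹' {β})
  have ht₂ : t₂ ∈ Icc a b ∩ θ ⁻¹' {β} :=
    (hθ.preimage_isClosed_of_isClosed isClosed_Icc isClosed_singleton).csInf_mem
      ⟨b, right_mem_Icc.2 hab, hb⟩ hbdd₂
  have hbefore : ∀ t ∈ Ico a t₂, θ t ≠ β := fun t ht hβ =>
    (csInf_le hbdd₂ ⟨⟨ht.1, ht.2.le.trans ht₂.1.2⟩, hβ⟩).not_gt ht.2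
  have hsub : Icc a t₂ ⊆ Icc a b := Icc_subset_Icc_right ht₂.1.2
  have hbdd₁ : BddAbove (Icc a t₂ ∩ θ ⁻¹' {α}) := bddAbove_Icc.mono inter_subset_left
  set t₁ := sSup (Icc a t₂ ∩ θ ⁻¹' {α})
  have ht₁ : t₁ ∈ Icc a t₂ ∩ θ ⁻¹' {α} :=
    ((hθ.mono hsub).preimage_isClosed_of_isClosed isClosed_Icc isClosed_singleton).csSup_mem
      ⟨a, left_mem_Icc.2 ht₂.1.1, ha⟩ hbdd₁
  have hafter : ∀ t ∈ Ioc t₁ t₂, θ t ≠ α := fun t ht hα =>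
    (le_csSup hbdd₁ ⟨⟨ht₁.1.1.trans ht.1.le, ht.2⟩, hα⟩).not_gt ht.1
  have hθ₁ : θ t₁ = α := ht₁.2
  have hθ₂ : θ t₂ = β := ht₂.2
  have hlt : t₁ < t₂ := ht₁.1.2.lt_of_ne fun h => hαβ.ne (by rw [← hθ₁, ← hθ₂, h])
  have hmem : ∀ t ∈ Ioo t₁ t₂, t ∈ Ioo a b := fun t ht =>
    ⟨ht₁.1.1.trans_lt ht.1, ht.2.trans_le ht₂.1.2⟩
  have hgood : ∀ t ∈ Ioo t₁ t₂, HasDerivAt θ (θ' t) t ∧ θ' t ≤ L := fun t ht =>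
    hderiv t (hmem t ht) (hafter t (Ioo_subset_Ioc_self ht))
      (hbefore t ⟨(hmem t ht).1.le, ht.2⟩)
  obtain ⟨ξ, hξ, hslope⟩ := exists_hasDerivAt_eq_slope θ θ' hlt
    (hθ.mono ((Icc_subset_Icc_left ht₁.1.1).trans hsub)) fun t ht => (hgood t ht).1
  have hξL := (hgood ξ hξ).2
  rw [hslope, hθ₁, hθ₂, div_le_iff₀ (sub_pos.2 hlt)] at hξL
  have hL : 0 ≤ L := by nlinarith
  calc β - α ≤ L * (t₂ - t₁) := hξL
    _ ≤ L * (b - a) := by gcongr; exacts [ht₂.1.2, ht₁.1.1]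

theorem pi_le_mul_of_norm_eq_one_of_eq_neg {u u' : ℝ → H} {L S : ℝ} (hS : 0 ≤ S)
    (hu : ∀ t, HasDerivAt u (u' t) t) (hnorm : ∀ t, ‖u t‖ = 1) (hspeed : ∀ t, ‖u' t‖ ≤ L)
    (hanti : u S = -u 0) : π ≤ L * S := by
  have horth : ∀ t, ⟪u t, u' t⟫ = 0 := fun t => by
    have hconst : HasDerivAt (‖u ·‖ ^ 2) 0 t := by
      simpa only [hnorm, one_pow] using hasDerivAt_const t (1 : ℝ)
    linarith [(hu t).norm_sq.unique hconst]
  set c : ℝ → ℝ := fun t => ⟪u 0, u t⟫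
  have hc : ∀ t, HasDerivAt c ⟪u 0, u' t⟫ t := fun t => by
    simpa using (hasDerivAt_const t (u 0)).inner ℝ (hu t)
  have hc₁ : ∀ t, |c t| ≤ 1 := fun t => by
    simpa [hnorm] using abs_real_inner_le_norm (u 0) (u t)
  have h := sub_le_mul_of_hasDerivAt_le_of_ne (θ := arccos ∘ c)
    (θ' := fun t => -(1 / √(1 - c t ^ 2)) * ⟪u 0, u' t⟫) (L := L) hS pi_pos
    (continuous_arccos.comp
      (continuous_iff_continuousAt.2 fun t => (hc t).continuousAt)).continuousOn
    (by simp [c, hnorm]) (by simp [c, hanti, hnorm])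
    fun t _ h0 hπ => by
      have hne₁ : c t ≠ 1 := fun h => h0 (by simp [h])
      have hne₂ : c t ≠ -1 := fun h => hπ (by simp [h])
      refine ⟨(hasDerivAt_arccos hne₂ hne₁).comp t (hc t), ?_⟩
      have hlt : |c t| < 1 := (hc₁ t).lt_of_ne fun h => ((abs_eq zero_le_one).1 h).elim hne₁ hne₂
      have hpos : 0 < √(1 - c t ^ 2) := sqrt_pos.2 (sub_pos.2 ((sq_lt_one_iff_abs_lt_one _).2 hlt))
      have hbound := abs_inner_le_norm_mul_sqrt (hnorm t) (hnorm 0) (horth t)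
      calc -(1 / √(1 - c t ^ 2)) * ⟪u 0, u' t⟫ ≤ |⟪u 0, u' t⟫| / √(1 - c t ^ 2) := by
            rw [neg_mul, one_div_mul_eq_div, neg_le, ← neg_div]
            exact div_le_div_of_nonneg_right (neg_abs_le _) hpos.le
        _ ≤ ‖u' t‖ := (div_le_iff₀ hpos).2 hbound
        _ ≤ L := hspeed t
  linarith

end InnerProduct

theorem yorke_period_bound_general {H : Type*} [NormedAddCommGroup H] [InnerProductSpace ℝ H]
    (f : H → H) (L : ℝ) (hL : 0 < L)
    (hf : ∀ x y : H, ‖f x - f y‖ ≤ L * ‖x - y‖)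
    (x : ℝ → H) (hx : ∀ t : ℝ, HasDerivAt x (f (x t)) t)
    (T : ℝ) (hT : 0 < T) (hper : Function.Periodic x T)
    (hnonconst : ∃ s t : ℝ, x s ≠ x t) :
    T ≥ 2 * π / L := by
  have hxc : Continuous x := continuous_iff_continuousAt.2 fun t => (hx t).continuousAt
  obtain ⟨T₀, ⟨hT₀per, hT₀⟩, hT₀min⟩ := hper.exists_isLeast_pos_period hT.ne' hxc hnonconst
  set S := T₀ / 2 with hS
  set y : ℝ → H := fun t => x (t + S) - x t
  have hy : ∀ t, HasDerivAt y (f (x (t + S)) - f (x t)) t := fun t =>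
    ((hx (t + S)).comp_add_const t S).sub (hx t)
  have hyper : Periodic y T₀ := fun t => by simp only [y, add_right_comm t T₀, hT₀per _]
  have hyanti : y S = -y 0 := by
    simp only [y, show S + S = T₀ by ring, hT₀per.eq, zero_add, neg_sub]
  have hy₀ : ∀ t, y t ≠ 0 := fun t₀ h₀ => by
    have hzero := hyper.eq_zero_of_norm_deriv_le_mul_norm hT₀ hy (fun t => hf _ _) h₀
    have hSper : S ∈ periods x := fun t => sub_eq_zero.1 (hzero t)
    linarith [hT₀min ⟨hSper, half_pos hT₀⟩]
  have hπ : π ≤ L * S := by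
    refine pi_le_mul_of_norm_eq_one_of_eq_neg (half_pos hT₀).le
      (fun t => (hy t).normalize (hy₀ t)) (fun t => NormedSpace.norm_normalize (hy₀ t))
      (fun t => ?_)
      (by rw [hyanti, NormedSpace.normalize_neg])
    rw [norm_smul, norm_inv, norm_norm, inv_mul_le_iff₀ (norm_pos_iff.2 (hy₀ t)), mul_comm]
    exact (norm_sub_inner_smul_le (NormedSpace.norm_normalize (hy₀ t)) _).trans (hf _ _)
  have hT₀T : T₀ ≤ T := hT₀min ⟨hper, hT⟩
  rw [ge_iff_le, div_le_iff₀ hL]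
  nlinarith

/-- Yorke's theorem in Hilbert spaces (Busenberg–Fisher–Martelli): any non-constant periodic
orbit of `x' = f(x)`, with `f : H → H` Lipschitz with constant `L > 0`, has period `T ≥ 2π/L`. -/
theorem yorke_period_bound {H : Type*} [NormedAddCommGroup H] [InnerProductSpace ℝ H]
    [CompleteSpace H] (f : H → H) (L : ℝ) (hL : 0 < L)
    (hf : ∀ x y : H, ‖f x - f y‖ ≤ L * ‖x - y‖)
    (x : ℝ → H) (hx : ∀ t : ℝ, HasDerivAt x (f (x t)) t)
    (T : ℝ) (hT : 0 < T) (hper : Function.Periodic x T)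
    (hnonconst : ∃ s t : ℝ, x s ≠ x t) :
    T ≥ 2 * π / L :=
  yorke_period_bound_general f L hL hf x hx T hT hper hnonconst
end

section
/- Let x : ℝ → H be a T-periodic C¹ solution of x' = f(x) with f L-Lipschitz on a Hilbert space H. Then for every h > 0, ∫₀^T ‖x(t+h) − x(t)‖² dt ≤ (LT/(2π))² ∫₀^T ‖x(t+h) − x(t)‖² dt; consequently if x is non-constant and h is chosen so that x(·+h) ≠ x(·), then LT ≥ 2π. -/
/-!
Put `y t = x (t + h) - x t`. It is `T`-periodic with mean zero and `y' = f (x (· + h)) - f ∘ x`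
satisfies `‖y'‖ ≤ L ‖y‖`, so Wirtinger's inequality `∫ ‖y‖² ≤ (T / 2π)² ∫ ‖y'‖²` gives the
estimate; if `L T < 2π` it forces `y = 0` on a period.

For scalar functions Wirtinger's inequality follows from Parseval's identity: the `n`-th Fourier
coefficient of `y` is `T / (2πin)` times that of `y'`, and the zeroth one vanishes. For
Hilbert-space-valued `y`, project onto the span of a finite `ε`-net of the compact set
`y '' [0, T]`, apply the finite-dimensional case coordinatewise, and let `ε → 0`.
-/

open Real MeasureTheory intervalIntegral

theorem norm_fourierCoeffOn_le_of_hasDerivAt {a b : ℝ} (hab : a < b) {g g' : ℝ → ℂ}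
    (hg : ∀ t ∈ Set.uIcc a b, HasDerivAt g (g' t) t) (hg' : IntervalIntegrable g' volume a b)
    (hgab : g a = g b) (hmean : ∫ t in a..b, g t = 0) (n : ℤ) :
    ‖fourierCoeffOn hab g n‖ ≤ (b - a) / (2 * π) * ‖fourierCoeffOn hab g' n‖ := by
  have hba : 0 < b - a := sub_pos.2 hab
  rcases eq_or_ne n 0 with rfl | hn
  · have : fourierCoeffOn hab g 0 = 0 := by simp [fourierCoeffOn_eq_integral, hmean]
    rw [this, norm_zero]
    positivity
  · rw [fourierCoeffOn_of_hasDerivAt hab hn hg hg', hgab, sub_self, mul_zero, zero_sub,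
      ← Complex.ofReal_sub]
    simp only [norm_mul, norm_div, norm_neg, norm_one, Complex.norm_I, Complex.norm_real,
      Complex.norm_intCast, Complex.norm_ofNat, norm_eq_abs, abs_of_pos pi_pos, abs_of_pos hba]
    have hn' : (1 : ℝ) ≤ |(n : ℝ)| := by exact_mod_cast Int.one_le_abs hn
    calc 1 / (2 * π * 1 * |(n : ℝ)|) * ((b - a) * ‖fourierCoeffOn hab g' n‖)
        = (b - a) / (2 * π) * ‖fourierCoeffOn hab g' n‖ / |(n : ℝ)| := by
          field_simp
      _ ≤ (b - a) / (2 * π) * ‖fourierCoeffOn hab g' n‖ := div_le_self (by positivity) hn'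

theorem wirtinger_inequality_complex {a b : ℝ} (hab : a < b) {g g' : ℝ → ℂ}
    (hg : ∀ t, HasDerivAt g (g' t) t) (hg' : Continuous g') (hgab : g a = g b)
    (hmean : ∫ t in a..b, g t = 0) :
    ∫ t in a..b, ‖g t‖ ^ 2 ≤ ((b - a) / (2 * π)) ^ 2 * ∫ t in a..b, ‖g' t‖ ^ 2 := by
  have hgc : Continuous g := continuous_iff_continuousAt.2 fun t => (hg t).continuousAt
  have hL2 : ∀ u : ℝ → ℂ, Continuous u → MemLp u 2 (volume.restrict (Set.Ioc a b)) :=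
    fun u hu => (memLp_two_iff_integrable_sq_norm hu.aestronglyMeasurable).2
      (hu.norm.pow 2).integrableOn_Ioc
  have hcoeff : ∀ n, ‖fourierCoeffOn hab g n‖ ^ 2 ≤
      ((b - a) / (2 * π)) ^ 2 * ‖fourierCoeffOn hab g' n‖ ^ 2 := fun n => by
    rw [← mul_pow]
    exact pow_le_pow_left₀ (norm_nonneg _) (norm_fourierCoeffOn_le_of_hasDerivAt hab
      (fun t _ => hg t) (hg'.intervalIntegrable a b) hgab hmean n) 2
  have hparseval := hasSum_le hcoeff (hasSum_sq_fourierCoeffOn hab (hL2 g hgc))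
    ((hasSum_sq_fourierCoeffOn hab (hL2 g' hg')).mul_left (((b - a) / (2 * π)) ^ 2))
  rwa [smul_eq_mul, smul_eq_mul, mul_left_comm,
    mul_le_mul_iff_right₀ (inv_pos.2 (sub_pos.2 hab))] at hparseval

theorem wirtinger_inequality_real {a b : ℝ} (hab : a < b) {g g' : ℝ → ℝ}
    (hg : ∀ t, HasDerivAt g (g' t) t) (hg' : Continuous g') (hgab : g a = g b)
    (hmean : ∫ t in a..b, g t = 0) :
    ∫ t in a..b, g t ^ 2 ≤ ((b - a) / (2 * π)) ^ 2 * ∫ t in a..b, g' t ^ 2 := by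
  have h := wirtinger_inequality_complex (g := fun t => (g t : ℂ)) (g' := fun t => (g' t : ℂ))
    hab (fun t => (hg t).ofReal_comp) (Complex.continuous_ofReal.comp hg')
    (congrArg Complex.ofReal hgab) (by rw [integral_ofReal, hmean, Complex.ofReal_zero])
  simpa only [Complex.norm_real, norm_eq_abs, sq_abs] using h

theorem wirtinger_inequality_of_finiteDimensional {E : Type*} [NormedAddCommGroup E]
    [InnerProductSpace ℝ E] [FiniteDimensional ℝ E] {a b : ℝ} (hab : a < b) {y y' : ℝ → E}
    (hy : ∀ t, HasDerivAt y (y' t) t) (hy' : Continuous y') (hyab : y a = y b)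
    (hmean : ∫ t in a..b, y t = 0) :
    ∫ t in a..b, ‖y t‖ ^ 2 ≤ ((b - a) / (2 * π)) ^ 2 * ∫ t in a..b, ‖y' t‖ ^ 2 := by
  have hyc : Continuous y := continuous_iff_continuousAt.2 fun t => (hy t).continuousAt
  let e := stdOrthonormalBasis ℝ E
  simp_rw [← e.sum_sq_inner_right]
  rw [intervalIntegral.integral_finsetSum fun i _ =>
      ((continuous_const.inner hyc).pow 2).intervalIntegrable a b,
    intervalIntegral.integral_finsetSum fun i _ =>
      ((continuous_const.inner hy').pow 2).intervalIntegrable a b, Finset.mul_sum]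
  refine Finset.sum_le_sum fun i _ => wirtinger_inequality_real hab
    (fun t => (innerSL ℝ (e i)).hasFDerivAt.comp_hasDerivAt t (hy t))
    ((innerSL ℝ (e i)).continuous.comp hy') (congrArg _ hyab) ?_
  simpa [hmean] using
    (innerSL ℝ (e i)).intervalIntegral_comp_comm (μ := volume) (hyc.intervalIntegrable a b)

theorem IsCompact.exists_finiteDimensional_norm_sq_le {𝕜 H : Type*} [RCLike 𝕜]
    [NormedAddCommGroup H] [InnerProductSpace 𝕜 H] {K : Set H} (hK : IsCompact K) {δ : ℝ}
    (hδ : 0 < δ) :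
    ∃ (V : Submodule 𝕜 H) (_ : FiniteDimensional 𝕜 V),
      ∀ v ∈ K, ‖v‖ ^ 2 ≤ ‖V.orthogonalProjectionOnto v‖ ^ 2 + δ := by
  obtain ⟨s, -, hs, hKs⟩ := hK.finite_cover_balls (sqrt_pos.2 hδ)
  have := FiniteDimensional.span_of_finite 𝕜 hs
  refine ⟨Submodule.span 𝕜 s, this, fun v hv => ?_⟩
  obtain ⟨w, hws, hvw⟩ := Set.mem_iUnion₂.1 (hKs hv)
  have hw : w ∈ Submodule.span 𝕜 s := Submodule.subset_span hws
  have : ‖(Submodule.span 𝕜 s)ᗮ.orthogonalProjectionOnto v‖ < √δ := by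
    calc _ = ‖(Submodule.span 𝕜 s)ᗮ.orthogonalProjectionOnto (v - w)‖ := by
          rw [map_sub, Submodule.orthogonalProjectionOnto_orthogonal_apply_eq_zero hw, sub_zero]
      _ ≤ ‖v - w‖ := Submodule.norm_orthogonalProjectionOnto_apply_le _ _
      _ < √δ := mem_ball_iff_norm.1 hvw
  rw [(Submodule.span 𝕜 s).norm_sq_eq_add_norm_sq_projection v, ← sq_sqrt hδ.le]
  gcongr

theorem wirtinger_inequality {H : Type*} [NormedAddCommGroup H] [InnerProductSpace ℝ H]
    [CompleteSpace H] {a b : ℝ} (hab : a < b) {y y' : ℝ → H}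
    (hy : ∀ t, HasDerivAt y (y' t) t) (hy' : Continuous y') (hyab : y a = y b)
    (hmean : ∫ t in a..b, y t = 0) :
    ∫ t in a..b, ‖y t‖ ^ 2 ≤ ((b - a) / (2 * π)) ^ 2 * ∫ t in a..b, ‖y' t‖ ^ 2 := by
  have hyc : Continuous y := continuous_iff_continuousAt.2 fun t => (hy t).continuousAt
  have hba : 0 < b - a := sub_pos.2 hab
  refine le_of_forall_pos_le_add fun ε hε => ?_
  obtain ⟨V, _, hV⟩ := (isCompact_Icc.image hyc).exists_finiteDimensional_norm_sq_le (𝕜 := ℝ)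
    (div_pos hε hba)
  set P := V.orthogonalProjectionOnto
  have hPy := wirtinger_inequality_of_finiteDimensional (y := fun t => P (y t)) hab
    (fun t => P.hasFDerivAt.comp_hasDerivAt t (hy t)) (P.continuous.comp hy') (congrArg P hyab)
    (by rw [P.intervalIntegral_comp_comm (hyc.intervalIntegrable a b), hmean, map_zero])
  calc ∫ t in a..b, ‖y t‖ ^ 2
      ≤ ∫ t in a..b, (‖P (y t)‖ ^ 2 + ε / (b - a)) :=
        integral_mono_on hab.le (Continuous.intervalIntegrable (by fun_prop) a b)
          (Continuous.intervalIntegrable (by fun_prop) a b) fun t ht => hV _ ⟨t, ht, rfl⟩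
    _ = (∫ t in a..b, ‖P (y t)‖ ^ 2) + ε := by
        rw [integral_add (Continuous.intervalIntegrable (by fun_prop) a b)
          intervalIntegrable_const, intervalIntegral.integral_const, smul_eq_mul,
          mul_div_cancel₀ _ hba.ne']
    _ ≤ ((b - a) / (2 * π)) ^ 2 * (∫ t in a..b, ‖P (y' t)‖ ^ 2) + ε := by gcongr
    _ ≤ ((b - a) / (2 * π)) ^ 2 * (∫ t in a..b, ‖y' t‖ ^ 2) + ε := by
        gcongr
        exact integral_mono_on hab.le (Continuous.intervalIntegrable (by fun_prop) a b)
          (Continuous.intervalIntegrable (by fun_prop) a b)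
          fun t _ => by gcongr; exact V.norm_orthogonalProjectionOnto_apply_le _

theorem integral_norm_sq_shift_sub_le_of_hasDerivAt {H : Type*} [NormedAddCommGroup H]
    [InnerProductSpace ℝ H] [CompleteSpace H] {f : H → H} {L : ℝ}
    (hf : ∀ u v, ‖f u - f v‖ ≤ L * ‖u - v‖) {x : ℝ → H} (hx : ∀ t, HasDerivAt x (f (x t)) t)
    {T : ℝ} (hT : 0 < T) (hper : Function.Periodic x T) (h : ℝ) :
    ∫ t in (0 : ℝ)..T, ‖x (t + h) - x t‖ ^ 2 ≤
      (L * T / (2 * π)) ^ 2 * ∫ t in (0 : ℝ)..T, ‖x (t + h) - x t‖ ^ 2 := by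
  have hfc : Continuous f := LipschitzWith.continuous (K := L.toNNReal) <|
    LipschitzWith.of_dist_le_mul fun u v => by
      simpa only [dist_eq_norm] using (hf u v).trans (by gcongr; exact le_coe_toNNReal L)
  have hxc : Continuous x := continuous_iff_continuousAt.2 fun t => (hx t).continuousAt
  have hy : ∀ t, HasDerivAt (fun s => x (s + h) - x s) (f (x (t + h)) - f (x t)) t :=
    fun t => ((hx (t + h)).comp_add_const t h).sub (hx t)
  have hmean : ∫ t in (0 : ℝ)..T, (x (t + h) - x t) = 0 := by
    have hxh : IntervalIntegrable (fun t => x (t + h)) volume 0 T :=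
      (hxc.comp (continuous_add_const h)).intervalIntegrable 0 T
    rw [integral_sub hxh (hxc.intervalIntegrable 0 T), integral_comp_add_right x h, zero_add,
      add_comm T h, hper.intervalIntegral_add_eq h 0, zero_add, sub_self]
  have hderiv : ∫ t in (0 : ℝ)..T, ‖f (x (t + h)) - f (x t)‖ ^ 2 ≤
      L ^ 2 * ∫ t in (0 : ℝ)..T, ‖x (t + h) - x t‖ ^ 2 := by
    rw [← intervalIntegral.integral_const_mul]
    refine integral_mono_on hT.le (Continuous.intervalIntegrable (by fun_prop) 0 T)
      (Continuous.intervalIntegrable (by fun_prop) 0 T) fun t _ => ?_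
    rw [← mul_pow]
    exact pow_le_pow_left₀ (norm_nonneg _) (hf _ _) 2
  calc ∫ t in (0 : ℝ)..T, ‖x (t + h) - x t‖ ^ 2
      ≤ (T / (2 * π)) ^ 2 * ∫ t in (0 : ℝ)..T, ‖f (x (t + h)) - f (x t)‖ ^ 2 := by
        simpa using wirtinger_inequality hT hy (by fun_prop)
          (by rw [zero_add, add_comm T h, hper h, hper.eq]) hmean
    _ ≤ (T / (2 * π)) ^ 2 * (L ^ 2 * ∫ t in (0 : ℝ)..T, ‖x (t + h) - x t‖ ^ 2) := by gcongr
    _ = (L * T / (2 * π)) ^ 2 * ∫ t in (0 : ℝ)..T, ‖x (t + h) - x t‖ ^ 2 := by ring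

/-- Key intermediate inequality in the Busenberg–Fisher–Martelli proof of Yorke's theorem:
for a `T`-periodic `C¹` solution `x` of `x' = f(x)` with `f` `L`-Lipschitz, for every `h > 0`,
`∫₀ᵀ ‖x(t+h)−x(t)‖² dt ≤ (LT/(2π))² ∫₀ᵀ ‖x(t+h)−x(t)‖² dt`; consequently if `x(·+h) ≠ x(·)`
for some `h > 0` then `LT ≥ 2π`. -/
theorem yorke_key_inequality {H : Type*} [NormedAddCommGroup H] [InnerProductSpace ℝ H]
    [CompleteSpace H] (f : H → H) (L : ℝ) (hL : 0 < L)
    (hf : ∀ x y : H, ‖f x - f y‖ ≤ L * ‖x - y‖)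
    (x : ℝ → H) (hx : ∀ t : ℝ, HasDerivAt x (f (x t)) t)
    (T : ℝ) (hT : 0 < T) (hper : Function.Periodic x T) :
    (∀ h : ℝ, 0 < h →
      (∫ t in (0 : ℝ)..T, ‖x (t + h) - x t‖ ^ 2) ≤
        (L * T / (2 * π)) ^ 2 * ∫ t in (0 : ℝ)..T, ‖x (t + h) - x t‖ ^ 2) ∧
    ((∃ h : ℝ, 0 < h ∧ ∃ t : ℝ, x (t + h) ≠ x t) → L * T ≥ 2 * π) := by
  refine ⟨fun h _ => integral_norm_sq_shift_sub_le_of_hasDerivAt hf hx hT hper h, ?_⟩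
  rintro ⟨h, -, t₀, hne⟩
  by_contra! hlt
  have hxc : Continuous x := continuous_iff_continuousAt.2 fun t => (hx t).continuousAt
  obtain ⟨t₁, ht₁, heq⟩ := ((hper.add_const h).sub hper).exists_mem_Ico₀ hT t₀
  have hne₁ : ((fun t => x (t + h)) - x) t₁ ≠ 0 := heq ▸ sub_ne_zero.2 hne
  have hpos : 0 < ∫ t in (0 : ℝ)..T, ‖x (t + h) - x t‖ ^ 2 :=
    integral_pos hT (Continuous.continuousOn (by fun_prop)) (fun _ _ => by positivity)
      ⟨t₁, Set.Ico_subset_Icc_self ht₁, pow_pos (norm_pos_iff.2 hne₁) 2⟩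
  have hsmall : (L * T / (2 * π)) ^ 2 < 1 := by
    rw [sq_lt_one_iff₀ (by positivity), div_lt_one (by positivity)]
    exact hlt
  nlinarith [integral_norm_sq_shift_sub_le_of_hasDerivAt hf hx hT hper h]
end
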